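/- Let f(z) = Re((1+z)/(1−z)) for z ∈ 𝔻 (the Poisson kernel at the boundary point 1, up to a constant). If c ≥ 0 is such that |log f(z) − log f(w)| ≤ c·ρ(z,w) for all z,w ∈ 𝔻, then c ≥ 2. Equivalently, the partial derivative of log f in the direction of the real axis at the origin equals 2, so f is not Log-Lipschitz with any constant smaller than 2. -/

import Mathlib

open MeasureTheory Filter Set

noncomputable section

/-- The open unit disk in the complex plane. -/
def unitDisk : Set ℂ := {z : ℂ | ‖z‖ < 1}

/-- The pseudohyperbolic (Gleason) distance on the unit disk. -/
def pdist (z w : ℂ) : ℝ := ‖(z - w) / (1 - (starRingEnd ℂ) z * w)‖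

/-- The hyperbolic (Poincaré) distance on the unit disk. -/
def hdist (z w : ℂ) : ℝ := (1 / 2) * Real.log ((1 + pdist z w) / (1 - pdist z w))

/-- A function is harmonic on `D` if it is continuous there and satisfies the mean value
equality over every circle whose closed disk is contained in `D`. -/
def HarmonicOnD (h : ℂ → ℝ) (D : Set ℂ) : Prop :=
  ContinuousOn h D ∧
  ∀ z ∈ D, ∀ r : ℝ, 0 < r → Metric.closedBall z r ⊆ D →
    h z = (2 * Real.pi)⁻¹ * ∫ θ in (0:ℝ)..(2 * Real.pi), h (z + r * Complex.exp (θ * Complex.I))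

/-- A function is superharmonic on `D` if it is lower semicontinuous there and satisfies the
super-mean-value inequality over every circle whose closed disk is contained in `D`. -/
def SuperharmonicOnD (u : ℂ → ℝ) (D : Set ℂ) : Prop :=
  LowerSemicontinuousOn u D ∧
  ∀ z ∈ D, ∀ r : ℝ, 0 < r → Metric.closedBall z r ⊆ D →
    (2 * Real.pi)⁻¹ * (∫ θ in (0:ℝ)..(2 * Real.pi), u (z + r * Complex.exp (θ * Complex.I))) ≤ u z

/-- `φ` admits a (positive) harmonic majorant on `D`. -/
def HasHarmonicMajorant (φ : ℂ → ℝ) (D : Set ℂ) : Prop :=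
  ∃ h : ℂ → ℝ, HarmonicOnD h D ∧ (∀ z ∈ D, 0 < h z) ∧ ∀ z ∈ D, φ z ≤ h z

/-- `F` is Log-Lipschitz with constant `C` with respect to the hyperbolic distance. -/
def LogLipWith (C : ℝ) (F : ℂ → ℝ) (D : Set ℂ) : Prop :=
  ∀ z ∈ D, ∀ w ∈ D, |Real.log (F z) - Real.log (F w)| ≤ C * hdist z w

/-- The Poisson-kernel-type function `f(z) = Re((1+z)/(1−z))` is not
Log-Lipschitz for the hyperbolic distance with any constant smaller than `2`: if
`|log f(z) − log f(w)| ≤ c ρ(z,w)` on the disk then `c ≥ 2`.  Equivalently, the derivative of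
`log f` along the real axis at the origin equals `2`. -/
theorem statement15 :
    (∀ c : ℝ, 0 ≤ c →
      (∀ z ∈ unitDisk, ∀ w ∈ unitDisk,
        |Real.log (((1 + z) / (1 - z)).re) - Real.log (((1 + w) / (1 - w)).re)|
          ≤ c * hdist z w) →
      2 ≤ c) ∧
    HasDerivAt (fun t : ℝ => Real.log (((1 + (t : ℂ)) / (1 - (t : ℂ))).re)) 2 0 := by

  have heq : ∀ t : ℝ, ((1 + (t : ℂ)) / (1 - (t : ℂ))).re = (1 + t) / (1 - t) := by
    intro t
    rw [show (1 + (t : ℂ)) / (1 - (t : ℂ)) = (((1 + t) / (1 - t) : ℝ) : ℂ) by push_cast; ring]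
    exact Complex.ofReal_re _
  constructor
  · intro c _ hc
    have hz : (1/2 : ℂ) ∈ unitDisk := by
      simp [unitDisk]
      norm_num
    have hw : (0 : ℂ) ∈ unitDisk := by simp [unitDisk]
    have h := hc (1/2) hz 0 hw
    have e1 : ((1 + (1/2 : ℂ)) / (1 - 1/2)).re = 3 := by
      have := heq (1/2); norm_num at this ⊢; try exact this
    have e2 : ((1 + (0 : ℂ)) / (1 - 0)).re = 1 := by
      have := heq 0; norm_num at this ⊢; try exact this
    have e3 : hdist (1/2) 0 = (1/2) * Real.log 3 := by
      have hp : pdist (1/2 : ℂ) 0 = 1/2 := by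
        simp [pdist]
      rw [hdist, hp]
      norm_num
    rw [e1, e2, e3, Real.log_one, sub_zero] at h
    have hlog : 0 < Real.log 3 := Real.log_pos (by norm_num)
    rw [abs_of_pos hlog] at h
    nlinarith
  · have h1 : HasDerivAt (fun t : ℝ => (1 + t) / (1 - t)) 2 0 := by
      have hn : HasDerivAt (fun t : ℝ => 1 + t) 1 0 := by
        simpa using (hasDerivAt_id (0:ℝ)).const_add 1
      have hd : HasDerivAt (fun t : ℝ => 1 - t) (-1) 0 := by
        simpa using (hasDerivAt_id (0:ℝ)).const_sub 1
      have := hn.div hd (by norm_num)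
      rw [show ((fun t : ℝ => 1 + t) / fun t => 1 - t) = fun t : ℝ => (1 + t) / (1 - t) from rfl] at this
      exact this.congr_deriv (by norm_num)
    have h2 : HasDerivAt (fun t : ℝ => Real.log ((1 + t) / (1 - t))) 2 0 := by
      have := h1.log (by norm_num)
      convert this using 1
      norm_num
    simpa only [heq] using h2
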